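/- arXiv:1609.08571 — 2 statements merged into one kernel-verified Lean document; each statement's English description precedes it below -/
import Mathlib

section
/- Let T ≥ 1 and d ≥ 1, let U_1,…,U_T be unitary d×d complex matrices and U := U_T⋯U_1, let Π_in and Π_out be orthogonal projections on ℂ^d, and let 0 ≤ ε ≤ 1 be such that |⟨η, Uξ⟩|² ≤ ε for all unit vectors ξ ∈ ker Π_in and η ∈ ker Π_out. Let ψ ∈ ℂ^{T+1} be a unit vector and define the projection Π_pen := |0⟩⟨0|⊗(I_d−Π_in) + |T⟩⟨T|⊗(I_d−Π_out) + Σ_{t=1}^{T−1} |t⟩⟨t|⊗I_d on ℂ^{T+1}⊗ℂ^d. Then for every unit vector ξ ∈ ℂ^d, the history state η := Σ_{t=0}^T ψ_t |t⟩⊗(U_t⋯U_1)ξ (where the empty product for t = 0 is I_d) is a unit vector satisfying ⟨η, Π_pen η⟩ ≤ 1 − min{|ψ_0|², |ψ_T|²}·(1 − √ε). -/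
open Matrix Kronecker

/-- The ordered product `U_t ⋯ U_1` (the empty product for `t = 0` is the identity). -/
noncomputable def prodU (d : ℕ) (U : ℕ → Matrix (Fin d) (Fin d) ℂ) (t : ℕ) :
    Matrix (Fin d) (Fin d) ℂ :=
  ((List.range t).reverse.map (fun i => U (i + 1))).prod

/-- The history state `Σ_t ψ_t |t⟩ ⊗ (U_t ⋯ U_1) ξ`. -/
noncomputable def historyState (T d : ℕ) (U : ℕ → Matrix (Fin d) (Fin d) ℂ)
    (ψ : Fin (T + 1) → ℂ) (ξ : Fin d → ℂ) : Fin (T + 1) × Fin d → ℂ :=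
  fun p => ψ p.1 * (prodU d U p.1.val).mulVec ξ p.2

/-- The projection onto the kernel of the penalty Hamiltonian,
`Π_pen = |0⟩⟨0|⊗(1−Π_in) + |T⟩⟨T|⊗(1−Π_out) + Σ_{0<t<T} |t⟩⟨t|⊗1`. -/
noncomputable def PiPen (T d : ℕ) (Pin Pout : Matrix (Fin d) (Fin d) ℂ) :
    Matrix (Fin (T + 1) × Fin d) (Fin (T + 1) × Fin d) ℂ :=
  Matrix.single (0 : Fin (T + 1)) (0 : Fin (T + 1)) (1 : ℂ) ⊗ₖ (1 - Pin)
  + Matrix.single (Fin.last T) (Fin.last T) (1 : ℂ) ⊗ₖ (1 - Pout)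
  + ∑ t ∈ Finset.univ.filter (fun t : Fin (T + 1) => t ≠ 0 ∧ t ≠ Fin.last T),
      Matrix.single t t (1 : ℂ) ⊗ₖ (1 : Matrix (Fin d) (Fin d) ℂ)

/-!
Let `W = U_T ⋯ U_1` and `y = Wξ`. The vectors `u = W(1 - Π_in)ξ` and `v = (1 - Π_out)y` are the
orthogonal projections of the unit vector `y` onto `W ker Π_in` and `ker Π_out`, and the acceptance
bound says that these subspaces make an angle whose cosine is at most `√ε`. Hence
`‖u‖² + ‖v‖² = Re ⟪y, u + v⟫ ≤ ‖u + v‖ ≤ √((1 + √ε)(‖u‖² + ‖v‖²))`, that is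
`‖Π_in ξ‖² + ‖Π_out y‖² ≥ 1 - √ε`. The history state carries weight `|ψ_t|²` on the unit vector
`U_t ⋯ U_1 ξ`, so its overlap with the kernel of the penalty Hamiltonian is
`1 - |ψ_0|² ‖Π_in ξ‖² - |ψ_T|² ‖Π_out y‖²`, and the bound follows.
-/

section InnerProductSpace

open RCLike
open scoped InnerProductSpace

variable {𝕜 E F : Type*} [RCLike 𝕜] [NormedAddCommGroup E] [InnerProductSpace 𝕜 E]
  [NormedAddCommGroup F] [InnerProductSpace 𝕜 F]

theorem norm_inner_map_le_of_norm_eq_one (f : E →ₗ[𝕜] F) {K : Submodule 𝕜 E}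
    {L : Submodule 𝕜 F} {c : ℝ}
    (h : ∀ x ∈ K, ∀ y ∈ L, ‖x‖ = 1 → ‖y‖ = 1 → ‖⟪y, f x⟫_𝕜‖ ≤ c)
    {x : E} {y : F} (hx : x ∈ K) (hy : y ∈ L) : ‖⟪y, f x⟫_𝕜‖ ≤ c * ‖x‖ * ‖y‖ := by
  rcases eq_or_ne x 0 with rfl | hx0
  · simp
  rcases eq_or_ne y 0 with rfl | hy0
  · simp
  have hunit := h _ (K.smul_mem (‖x‖⁻¹ : 𝕜) hx) _ (L.smul_mem (‖y‖⁻¹ : 𝕜) hy)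
    (norm_smul_inv_norm hx0) (norm_smul_inv_norm hy0)
  rw [map_smul, inner_smul_left, inner_smul_right, norm_mul, norm_mul] at hunit
  simp only [norm_conj, norm_inv, norm_ofReal, abs_norm] at hunit
  have hx' : 0 < ‖x‖ := norm_pos_iff.mpr hx0
  have hy' : 0 < ‖y‖ := norm_pos_iff.mpr hy0
  calc ‖⟪y, f x⟫_𝕜‖ = ‖x‖ * ‖y‖ * (‖y‖⁻¹ * (‖x‖⁻¹ * ‖⟪y, f x⟫_𝕜‖)) := by field_simp
    _ ≤ ‖x‖ * ‖y‖ * c := by gcongr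
    _ = c * ‖x‖ * ‖y‖ := by ring

theorem sq_norm_add_sq_norm_le_one_add {y u v : E} {s : ℝ} (hs : 0 ≤ s) (hy : ‖y‖ ≤ 1)
    (hyu : re ⟪y, u⟫_𝕜 = ‖u‖ ^ 2) (hyv : re ⟪y, v⟫_𝕜 = ‖v‖ ^ 2)
    (huv : ‖⟪v, u⟫_𝕜‖ ≤ s * ‖u‖ * ‖v‖) : ‖u‖ ^ 2 + ‖v‖ ^ 2 ≤ 1 + s := by
  set m := ‖u‖ ^ 2 + ‖v‖ ^ 2
  have hm : m ≤ ‖u + v‖ :=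
    calc m = re ⟪y, u + v⟫_𝕜 := by rw [inner_add_right, map_add, hyu, hyv]
      _ ≤ ‖y‖ * ‖u + v‖ := re_inner_le_norm (𝕜 := 𝕜) _ _
      _ ≤ ‖u + v‖ := mul_le_of_le_one_left (norm_nonneg _) hy
  have hre : re ⟪u, v⟫_𝕜 ≤ s * ‖u‖ * ‖v‖ :=
    (re_le_norm _).trans (by rwa [norm_inner_symm])
  have hsq : ‖u + v‖ ^ 2 ≤ (1 + s) * m := by
    rw [norm_add_sq (𝕜 := 𝕜)]
    nlinarith [two_mul_le_add_sq ‖u‖ ‖v‖]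
  have hm0 : 0 ≤ m := by positivity
  have hm2 : m ^ 2 ≤ (1 + s) * m := (pow_le_pow_left₀ hm0 hm 2).trans hsq
  nlinarith

end InnerProductSpace

section Matrix

open RCLike

variable {𝕜 n : Type*} [RCLike 𝕜] [Fintype n]

theorem inner_toLp_eq_star_dotProduct (x y : n → 𝕜) :
    inner 𝕜 (WithLp.toLp 2 x : EuclideanSpace 𝕜 n) (WithLp.toLp 2 y) = star x ⬝ᵥ y := by
  rw [EuclideanSpace.inner_toLp_toLp, dotProduct_comm]

theorem sq_norm_toLp (x : n → 𝕜) :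
    ‖(WithLp.toLp 2 x : EuclideanSpace 𝕜 n)‖ ^ 2 = re (star x ⬝ᵥ x) := by
  rw [← inner_self_eq_norm_sq (𝕜 := 𝕜), inner_toLp_eq_star_dotProduct]

theorem star_mulVec_dotProduct_mulVec_of_mem_unitaryGroup {R : Type*} [CommRing R] [StarRing R]
    [DecidableEq n] {W : Matrix n n R} (hW : W ∈ unitaryGroup n R) (x y : n → R) :
    star (W *ᵥ x) ⬝ᵥ W *ᵥ y = star x ⬝ᵥ y := by
  rw [star_mulVec, dotProduct_mulVec, vecMul_vecMul, ← star_eq_conjTranspose,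
    mem_unitaryGroup_iff'.mp hW, vecMul_one]

theorem norm_toLp_mulVec_of_mem_unitaryGroup [DecidableEq n] {W : Matrix n n 𝕜}
    (hW : W ∈ unitaryGroup n 𝕜) (x : n → 𝕜) :
    ‖(WithLp.toLp 2 (W *ᵥ x) : EuclideanSpace 𝕜 n)‖
      = ‖(WithLp.toLp 2 x : EuclideanSpace 𝕜 n)‖ := by
  rw [← sq_eq_sq₀ (norm_nonneg _) (norm_nonneg _), sq_norm_toLp, sq_norm_toLp,
    star_mulVec_dotProduct_mulVec_of_mem_unitaryGroup hW]

theorem IsStarProjection.star_dotProduct_mulVec_self {R : Type*} [CommRing R] [StarRing R]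
    {P : Matrix n n R} (hP : IsStarProjection P) (x : n → R) :
    star x ⬝ᵥ P *ᵥ x = star (P *ᵥ x) ⬝ᵥ P *ᵥ x := by
  rw [star_mulVec, ← dotProduct_mulVec, mulVec_mulVec, ← star_eq_conjTranspose,
    hP.isSelfAdjoint.star_eq, hP.isIdempotentElem.eq]

theorem IsStarProjection.re_star_dotProduct_mulVec_self_nonneg {P : Matrix n n 𝕜}
    (hP : IsStarProjection P) (x : n → 𝕜) : 0 ≤ re (star x ⬝ᵥ P *ᵥ x) := by
  rw [hP.star_dotProduct_mulVec_self, ← sq_norm_toLp]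
  positivity

theorem inner_eq_star_ofLp_dotProduct (x y : EuclideanSpace 𝕜 n) :
    inner 𝕜 x y = star x.ofLp ⬝ᵥ y.ofLp :=
  inner_toLp_eq_star_dotProduct x.ofLp y.ofLp

theorem norm_inner_toLpLin_le_sqrt [DecidableEq n] {P Q W : Matrix n n 𝕜} {ε : ℝ}
    (hacc : ∀ ξ η : n → 𝕜, P *ᵥ ξ = 0 → Q *ᵥ η = 0 → star ξ ⬝ᵥ ξ = 1 → star η ⬝ᵥ η = 1 →
      ‖star η ⬝ᵥ W *ᵥ ξ‖ ^ 2 ≤ ε)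
    {x z : EuclideanSpace 𝕜 n} (hx : x ∈ LinearMap.ker (toLpLin 2 2 P))
    (hz : z ∈ LinearMap.ker (toLpLin 2 2 Q)) (hx1 : ‖x‖ = 1) (hz1 : ‖z‖ = 1) :
    ‖inner 𝕜 z (toLpLin 2 2 W x)‖ ≤ √ε := by
  have unit {w : EuclideanSpace 𝕜 n} (hw : ‖w‖ = 1) : star w.ofLp ⬝ᵥ w.ofLp = 1 := by
    rw [← inner_eq_star_ofLp_dotProduct, inner_self_eq_norm_sq_to_K, hw, ofReal_one, one_pow]
  rw [← Real.sqrt_sq (norm_nonneg _), inner_eq_star_ofLp_dotProduct]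
  exact Real.sqrt_le_sqrt <| hacc _ _ (congrArg WithLp.ofLp hx) (congrArg WithLp.ofLp hz)
    (unit hx1) (unit hz1)

theorem one_sub_sqrt_le_re_add_re [DecidableEq n] {P Q W : Matrix n n 𝕜}
    (hP : IsStarProjection P) (hQ : IsStarProjection Q) (hW : W ∈ unitaryGroup n 𝕜) {ε : ℝ}
    (hacc : ∀ ξ η : n → 𝕜, P *ᵥ ξ = 0 → Q *ᵥ η = 0 → star ξ ⬝ᵥ ξ = 1 → star η ⬝ᵥ η = 1 →
      ‖star η ⬝ᵥ W *ᵥ ξ‖ ^ 2 ≤ ε)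
    {ξ : n → 𝕜} (hξ : star ξ ⬝ᵥ ξ = 1) :
    1 - √ε ≤ re (star ξ ⬝ᵥ P *ᵥ ξ) + re (star (W *ᵥ ξ) ⬝ᵥ Q *ᵥ (W *ᵥ ξ)) := by
  set y := W *ᵥ ξ
  set u := W *ᵥ ((1 - P) *ᵥ ξ)
  set v := (1 - Q) *ᵥ y
  have hy : star y ⬝ᵥ y = 1 := by
    rw [star_mulVec_dotProduct_mulVec_of_mem_unitaryGroup hW, hξ]
  have hu : star y ⬝ᵥ u = star u ⬝ᵥ u := by
    rw [star_mulVec_dotProduct_mulVec_of_mem_unitaryGroup hW,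
      star_mulVec_dotProduct_mulVec_of_mem_unitaryGroup hW, hP.one_sub.star_dotProduct_mulVec_self]
  have hv : star y ⬝ᵥ v = star v ⬝ᵥ v := hQ.one_sub.star_dotProduct_mulVec_self y
  have huv : ‖inner 𝕜 (WithLp.toLp 2 v : EuclideanSpace 𝕜 n) (WithLp.toLp 2 u)‖
      ≤ √ε * ‖(WithLp.toLp 2 u : EuclideanSpace 𝕜 n)‖
        * ‖(WithLp.toLp 2 v : EuclideanSpace 𝕜 n)‖ := by
    rw [norm_toLp_mulVec_of_mem_unitaryGroup hW]
    have h := norm_inner_map_le_of_norm_eq_one _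
      (fun x hx z hz => norm_inner_toLpLin_le_sqrt hacc hx hz) (x := WithLp.toLp 2 ((1 - P) *ᵥ ξ))
      (y := WithLp.toLp 2 v) (by simp [mulVec_mulVec, hP.mul_one_sub_self])
      (by simp [v, mulVec_mulVec, hQ.mul_one_sub_self])
    rwa [toLpLin_toLp, toLin'_apply] at h
  have key := sq_norm_add_sq_norm_le_one_add (𝕜 := 𝕜) (Real.sqrt_nonneg ε)
    (y := (WithLp.toLp 2 y : EuclideanSpace 𝕜 n)) (u := WithLp.toLp 2 u) (v := WithLp.toLp 2 v)
    (by rw [← sq_le_one_iff₀ (norm_nonneg _), sq_norm_toLp, hy]; simp)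
    (by rw [inner_toLp_eq_star_dotProduct, hu, sq_norm_toLp])
    (by rw [inner_toLp_eq_star_dotProduct, hv, sq_norm_toLp]) huv
  have hu' : star u ⬝ᵥ u = 1 - star ξ ⬝ᵥ P *ᵥ ξ := by
    rw [← hu, star_mulVec_dotProduct_mulVec_of_mem_unitaryGroup hW, sub_mulVec, one_mulVec,
      dotProduct_sub, hξ]
  have hv' : star v ⬝ᵥ v = 1 - star y ⬝ᵥ Q *ᵥ y := by
    rw [← hv]
    simp only [v, sub_mulVec, one_mulVec, dotProduct_sub, hy]
  rw [sq_norm_toLp, sq_norm_toLp, hu', hv'] at key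
  simp only [map_sub, one_re] at key
  linarith

end Matrix

theorem dotProduct_single_kronecker_mulVec {ι m R : Type*} [Fintype ι] [DecidableEq ι]
    [Fintype m] [CommSemiring R] (r : ι) (B : Matrix m m R) (w v : ι × m → R) :
    w ⬝ᵥ (single r r 1 ⊗ₖ B) *ᵥ v = (fun j => w (r, j)) ⬝ᵥ B *ᵥ fun j => v (r, j) := by
  simp [dotProduct, mulVec, Fintype.sum_prod_type, single_apply, ite_and, Finset.mul_sum]

theorem sum_filter_ne_zero_ne_last {M : Type*} [AddCommGroup M] {T : ℕ} (hT : 1 ≤ T)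
    (f : Fin (T + 1) → M) :
    ∑ t ∈ Finset.univ.filter (fun t : Fin (T + 1) => t ≠ 0 ∧ t ≠ Fin.last T), f t
      = ∑ t, f t - f 0 - f (Fin.last T) := by
  have h0 : (0 : Fin (T + 1)) ≠ Fin.last T := by
    rw [Ne, Fin.ext_iff, Fin.val_zero, Fin.val_last]
    omega
  have hcompl : Finset.univ.filter (fun t : Fin (T + 1) => ¬(t ≠ 0 ∧ t ≠ Fin.last T))
      = {0, Fin.last T} := by
    ext t
    simp [or_iff_not_imp_left]
  rw [← Finset.sum_filter_add_sum_filter_not Finset.univ (fun t => t ≠ 0 ∧ t ≠ Fin.last T),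
    hcompl, Finset.sum_pair h0]
  abel

section History

variable {T d : ℕ} {U : ℕ → Matrix (Fin d) (Fin d) ℂ}

theorem prodU_zero : prodU d U 0 = 1 := by simp [prodU]

theorem prodU_succ (t : ℕ) : prodU d U (t + 1) = U (t + 1) * prodU d U t := by
  simp [prodU, List.range_succ]

theorem prodU_mem_unitaryGroup {t : ℕ}
    (hU : ∀ i, 1 ≤ i → i ≤ t → U i ∈ unitaryGroup (Fin d) ℂ) :
    prodU d U t ∈ unitaryGroup (Fin d) ℂ := by
  induction t with
  | zero => exact prodU_zero ▸ one_mem _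
  | succ k ih =>
    rw [prodU_succ]
    exact mul_mem (hU _ (by omega) le_rfl) (ih fun i h1 h2 => hU i h1 (by omega))

variable {ψ : Fin (T + 1) → ℂ} {ξ : Fin d → ℂ}

theorem star_prodU_mulVec_dotProduct_prodU_mulVec
    (hU : ∀ i, 1 ≤ i → i ≤ T → U i ∈ unitaryGroup (Fin d) ℂ) (t : Fin (T + 1)) :
    star (prodU d U t *ᵥ ξ) ⬝ᵥ prodU d U t *ᵥ ξ = star ξ ⬝ᵥ ξ :=
  star_mulVec_dotProduct_mulVec_of_mem_unitaryGroup
    (prodU_mem_unitaryGroup fun i h1 h2 => hU i h1 (h2.trans t.is_le)) ξ ξ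

theorem star_historyState_dotProduct_single_kronecker_mulVec (r : Fin (T + 1))
    (B : Matrix (Fin d) (Fin d) ℂ) :
    star (historyState T d U ψ ξ) ⬝ᵥ (single r r 1 ⊗ₖ B) *ᵥ historyState T d U ψ ξ
      = ((‖ψ r‖ ^ 2 : ℝ) : ℂ) * (star (prodU d U r *ᵥ ξ) ⬝ᵥ B *ᵥ (prodU d U r *ᵥ ξ)) := by
  rw [dotProduct_single_kronecker_mulVec]
  change star (ψ r • prodU d U r *ᵥ ξ) ⬝ᵥ B *ᵥ (ψ r • prodU d U r *ᵥ ξ) = _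
  rw [star_smul, mulVec_smul, smul_dotProduct, dotProduct_smul, smul_smul, smul_eq_mul,
    Complex.star_def, Complex.conj_mul', Complex.ofReal_pow]

theorem star_historyState_dotProduct_self
    (hU : ∀ i, 1 ≤ i → i ≤ T → U i ∈ unitaryGroup (Fin d) ℂ) (hξ : star ξ ⬝ᵥ ξ = 1) :
    star (historyState T d U ψ ξ) ⬝ᵥ historyState T d U ψ ξ = star ψ ⬝ᵥ ψ := by
  rw [dotProduct, Fintype.sum_prod_type]
  refine Finset.sum_congr rfl fun t _ => ?_
  change star (ψ t • prodU d U t *ᵥ ξ) ⬝ᵥ (ψ t • prodU d U t *ᵥ ξ) = _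
  rw [star_smul, smul_dotProduct, dotProduct_smul, star_prodU_mulVec_dotProduct_prodU_mulVec hU,
    hξ]
  simp [mul_comm]

theorem star_historyState_dotProduct_PiPen_mulVec (hT : 1 ≤ T)
    (hU : ∀ i, 1 ≤ i → i ≤ T → U i ∈ unitaryGroup (Fin d) ℂ) (hψ : star ψ ⬝ᵥ ψ = 1)
    (hξ : star ξ ⬝ᵥ ξ = 1) (Pin Pout : Matrix (Fin d) (Fin d) ℂ) :
    star (historyState T d U ψ ξ) ⬝ᵥ (PiPen T d Pin Pout) *ᵥ historyState T d U ψ ξ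
      = 1 - ((‖ψ 0‖ ^ 2 : ℝ) : ℂ) * (star ξ ⬝ᵥ Pin *ᵥ ξ)
        - ((‖ψ (Fin.last T)‖ ^ 2 : ℝ) : ℂ)
          * (star (prodU d U T *ᵥ ξ) ⬝ᵥ Pout *ᵥ (prodU d U T *ᵥ ξ)) := by
  have hunit (t : Fin (T + 1)) : star (prodU d U t *ᵥ ξ) ⬝ᵥ prodU d U t *ᵥ ξ = 1 :=
    (star_prodU_mulVec_dotProduct_prodU_mulVec hU t).trans hξ
  have hsum : ∑ t, ((‖ψ t‖ ^ 2 : ℝ) : ℂ) = 1 := by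
    rw [← hψ, dotProduct]
    simp [Complex.conj_mul']
  rw [PiPen, add_mulVec, add_mulVec, sum_mulVec, dotProduct_add, dotProduct_add, dotProduct_sum]
  simp only [star_historyState_dotProduct_single_kronecker_mulVec, one_mulVec, hunit, mul_one,
    Fin.val_zero, prodU_zero, sub_mulVec, dotProduct_sub, hξ]
  rw [sum_filter_ne_zero_ne_last hT, hsum, Fin.val_last]
  ring

end History

theorem stmt2_general (T d : ℕ) (hT : 1 ≤ T)
    (U : ℕ → Matrix (Fin d) (Fin d) ℂ)
    (hU : ∀ i, 1 ≤ i → i ≤ T → U i ∈ Matrix.unitaryGroup (Fin d) ℂ)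
    (Pin Pout : Matrix (Fin d) (Fin d) ℂ)
    (hPin : Pin.IsHermitian) (hPin2 : Pin * Pin = Pin)
    (hPout : Pout.IsHermitian) (hPout2 : Pout * Pout = Pout)
    (ε : ℝ)
    (hacc : ∀ ξ η : Fin d → ℂ, Pin.mulVec ξ = 0 → Pout.mulVec η = 0 →
      star ξ ⬝ᵥ ξ = 1 → star η ⬝ᵥ η = 1 →
      ‖star η ⬝ᵥ (prodU d U T).mulVec ξ‖ ^ 2 ≤ ε)
    (ψ : Fin (T + 1) → ℂ) (hψ : star ψ ⬝ᵥ ψ = 1)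
    (ξ : Fin d → ℂ) (hξ : star ξ ⬝ᵥ ξ = 1) :
    star (historyState T d U ψ ξ) ⬝ᵥ historyState T d U ψ ξ = 1 ∧
    (star (historyState T d U ψ ξ) ⬝ᵥ
        (PiPen T d Pin Pout).mulVec (historyState T d U ψ ξ)).re
      ≤ 1 - min (‖ψ 0‖ ^ 2) (‖ψ (Fin.last T)‖ ^ 2)
          * (1 - Real.sqrt ε) := by
  refine ⟨(star_historyState_dotProduct_self hU hξ).trans hψ, ?_⟩
  have hPin' : IsStarProjection Pin := ⟨hPin2, hPin⟩
  have hPout' : IsStarProjection Pout := ⟨hPout2, hPout⟩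
  have key := one_sub_sqrt_le_re_add_re hPin' hPout' (prodU_mem_unitaryGroup hU) hacc hξ
  have ha := hPin'.re_star_dotProduct_mulVec_self_nonneg ξ
  have hb := hPout'.re_star_dotProduct_mulVec_self_nonneg (prodU d U T *ᵥ ξ)
  rw [star_historyState_dotProduct_PiPen_mulVec hT hU hψ hξ]
  simp only [RCLike.re_to_complex] at key ha hb
  simp only [Complex.sub_re, Complex.one_re, Complex.re_ofReal_mul]
  have hmin0 : 0 ≤ min (‖ψ 0‖ ^ 2) (‖ψ (Fin.last T)‖ ^ 2) := by positivity
  nlinarith [min_le_left (‖ψ 0‖ ^ 2) (‖ψ (Fin.last T)‖ ^ 2),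
    min_le_right (‖ψ 0‖ ^ 2) (‖ψ (Fin.last T)‖ ^ 2)]

theorem stmt2 (T d : ℕ) (hT : 1 ≤ T) (hd : 1 ≤ d)
    (U : ℕ → Matrix (Fin d) (Fin d) ℂ)
    (hU : ∀ i, 1 ≤ i → i ≤ T → U i ∈ Matrix.unitaryGroup (Fin d) ℂ)
    (Pin Pout : Matrix (Fin d) (Fin d) ℂ)
    (hPin : Pin.IsHermitian) (hPin2 : Pin * Pin = Pin)
    (hPout : Pout.IsHermitian) (hPout2 : Pout * Pout = Pout)
    (ε : ℝ) (hε0 : 0 ≤ ε) (hε1 : ε ≤ 1)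
    (hacc : ∀ ξ η : Fin d → ℂ, Pin.mulVec ξ = 0 → Pout.mulVec η = 0 →
      star ξ ⬝ᵥ ξ = 1 → star η ⬝ᵥ η = 1 →
      ‖star η ⬝ᵥ (prodU d U T).mulVec ξ‖ ^ 2 ≤ ε)
    (ψ : Fin (T + 1) → ℂ) (hψ : star ψ ⬝ᵥ ψ = 1)
    (ξ : Fin d → ℂ) (hξ : star ξ ⬝ᵥ ξ = 1) :
    star (historyState T d U ψ ξ) ⬝ᵥ historyState T d U ψ ξ = 1 ∧
    (star (historyState T d U ψ ξ) ⬝ᵥ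
        (PiPen T d Pin Pout).mulVec (historyState T d U ψ ξ)).re
      ≤ 1 - min (‖ψ 0‖ ^ 2) (‖ψ (Fin.last T)‖ ^ 2)
          * (1 - Real.sqrt ε) :=
  stmt2_general T d hT U hU Pin Pout hPin hPin2 hPout hPout2 ε hacc ψ hψ ξ hξ
end

section
/- There exists a constant C > 0 such that for every integer T ≥ 1 and every (T+1)×(T+1) complex Hermitian matrix H which is tridiagonal in the standard basis (H_{t,t'} = 0 whenever |t − t'| > 1) and whose entries all have absolute value at most 1, the following holds: writing E_0 ≤ E_1 ≤ ⋯ ≤ E_T for the eigenvalues of H with multiplicity, every unit eigenvector ψ with Hψ = E_0 ψ satisfies (E_1 − E_0) · min{ |ψ_0|², |ψ_T|² } ≤ C/T². -/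
/-!
Let `μ = ∑ t |ψ_t|² t` be the mean position of `ψ` and `φ_t = (t - μ) ψ_t`, so that `φ ⊥ ψ`.
By the variational characterisation of `E₁`, `(E₁ - E₀) ‖φ‖² ≤ ⟪φ, (H - E₀) φ⟫`. Since
`Hψ = E₀ψ`, the right-hand side equals `-½ ∑ (t - t')² ψ̄_t H_{tt'} ψ_{t'}`, a sum over the
nearest-neighbour pairs only, which is at most `‖ψ‖² = 1`. On the other hand
`‖φ‖² ≥ (μ² + (T - μ)²) min(|ψ₀|², |ψ_T|²) ≥ T²/2 · min(|ψ₀|², |ψ_T|²)`.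
-/

open Matrix

namespace LinearMap.IsSymmetric

variable {𝕜 E ι : Type*} [RCLike 𝕜] [NormedAddCommGroup E] [InnerProductSpace 𝕜 E] [Fintype ι]
  {T : E →ₗ[𝕜] E} {b : OrthonormalBasis ι 𝕜 E} {ev : ι → ℝ}

lemma inner_eigenbasis_map (hT : T.IsSymmetric) (hb : ∀ i, T (b i) = (ev i : 𝕜) • b i)
    (i : ι) (x : E) : inner 𝕜 (b i) (T x) = ev i * inner 𝕜 (b i) x := by
  rw [← hT, hb, inner_smul_left, RCLike.conj_ofReal]

lemma re_inner_map_self_eq_sum (hT : T.IsSymmetric) (hb : ∀ i, T (b i) = (ev i : 𝕜) • b i)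
    (x : E) : RCLike.re (inner 𝕜 x (T x)) = ∑ i, ev i * ‖inner 𝕜 (b i) x‖ ^ 2 := by
  rw [← b.sum_inner_mul_inner, map_sum]
  refine Finset.sum_congr rfl fun i _ => ?_
  rw [hT.inner_eigenbasis_map hb, ← inner_conj_symm, mul_left_comm, RCLike.conj_mul]
  norm_cast

lemma inner_eigenbasis_eq_zero_of_ne (hT : T.IsSymmetric) (hb : ∀ i, T (b i) = (ev i : 𝕜) • b i)
    {μ : 𝕜} {x : E} (hx : T x = μ • x) {i : ι} (hi : (ev i : 𝕜) ≠ μ) :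
    inner 𝕜 (b i) x = 0 := by
  have h := hT.inner_eigenbasis_map hb i x
  rw [hx, inner_smul_right] at h
  exact (mul_eq_mul_right_iff.mp h.symm).resolve_left hi

lemma le_re_inner_map_self_of_orthogonal (hT : T.IsSymmetric)
    (hb : ∀ i, T (b i) = (ev i : 𝕜) • b i) {i₀ : ι} {μ e : ℝ} (hμe : μ < e)
    (hgap : ∀ i, i ≠ i₀ → e ≤ ev i) {ψ : E} (hψ : ψ ≠ 0) (hTψ : T ψ = (μ : 𝕜) • ψ)
    {φ : E} (hφ : inner 𝕜 ψ φ = 0) : e * ‖φ‖ ^ 2 ≤ RCLike.re (inner 𝕜 φ (T φ)) := by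
  have hcoeff : ∀ i, i ≠ i₀ → inner 𝕜 (b i) ψ = 0 := fun i hi =>
    hT.inner_eigenbasis_eq_zero_of_ne hb hTψ (by exact_mod_cast (hμe.trans_le (hgap i hi)).ne')
  have hψ_eq : ψ = inner 𝕜 (b i₀) ψ • b i₀ := by
    conv_lhs => rw [← b.sum_repr' ψ]
    exact Finset.sum_eq_single i₀ (fun i _ hi => by rw [hcoeff i hi, zero_smul])
      (fun h => absurd (Finset.mem_univ _) h)
  have hφ₀ : inner 𝕜 (b i₀) φ = 0 := by
    have hc : inner 𝕜 (b i₀) ψ ≠ 0 := fun h => hψ (by rw [hψ_eq, h, zero_smul])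
    rw [hψ_eq, inner_smul_left] at hφ
    exact (mul_eq_zero.mp hφ).resolve_left ((map_ne_zero _).mpr hc)
  rw [hT.re_inner_map_self_eq_sum hb, ← b.sum_sq_norm_inner_right, Finset.mul_sum]
  refine Finset.sum_le_sum fun i _ => ?_
  rcases eq_or_ne i i₀ with rfl | hi
  · simp [hφ₀]
  · exact mul_le_mul_of_nonneg_right (hgap i hi) (sq_nonneg _)

end LinearMap.IsSymmetric

section RCLike

variable {𝕜 n : Type*} [RCLike 𝕜] [Fintype n]

namespace Matrix.IsHermitian

variable [DecidableEq n] {A : Matrix n n 𝕜}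

lemma toEuclideanLin_eigenvectorBasis (hA : A.IsHermitian) (j : n) :
    toEuclideanLin A (hA.eigenvectorBasis j) = (hA.eigenvalues j : 𝕜) • hA.eigenvectorBasis j := by
  rw [← RCLike.real_smul_eq_coe_smul]
  apply WithLp.ofLp_injective
  rw [WithLp.ofLp_smul, ← hA.mulVec_eigenvectorBasis j]
  rfl

lemma le_re_dotProduct_mulVec_of_orthogonal (hA : A.IsHermitian) {i₀ : n} {μ e : ℝ}
    (hμe : μ < e) (hgap : ∀ i, i ≠ i₀ → e ≤ hA.eigenvalues i) {ψ : n → 𝕜} (hψ : ψ ≠ 0)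
    (hAψ : A *ᵥ ψ = (μ : 𝕜) • ψ) {φ : n → 𝕜} (hφ : star ψ ⬝ᵥ φ = 0) :
    e * RCLike.re (star φ ⬝ᵥ φ) ≤ RCLike.re (star φ ⬝ᵥ A *ᵥ φ) := by
  have h := (isSymmetric_toEuclideanLin_iff.mpr hA).le_re_inner_map_self_of_orthogonal
    hA.toEuclideanLin_eigenvectorBasis hμe hgap (ψ := WithLp.toLp 2 ψ)
    (by simpa using hψ) (by rw [toLpLin_toLp, toLin'_apply, hAψ]; rfl)
    (φ := WithLp.toLp 2 φ) (by rw [EuclideanSpace.inner_toLp_toLp, dotProduct_comm, hφ])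
  rwa [← inner_self_eq_norm_sq (𝕜 := 𝕜), toLpLin_toLp, toLin'_apply,
    EuclideanSpace.inner_toLp_toLp, EuclideanSpace.inner_toLp_toLp, dotProduct_comm,
    dotProduct_comm (A *ᵥ φ)] at h

end Matrix.IsHermitian

lemma star_dotProduct_ofReal_mul (f g : n → ℝ) (ψ : n → 𝕜) :
    star (fun t => (f t : 𝕜) * ψ t) ⬝ᵥ (fun t => (g t : 𝕜) * ψ t)
      = ((∑ t, f t * g t * ‖ψ t‖ ^ 2 : ℝ) : 𝕜) := by
  push_cast
  refine Finset.sum_congr rfl fun t _ => ?_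
  rw [Pi.star_apply, star_mul', RCLike.star_def, RCLike.conj_ofReal, ← RCLike.conj_mul]
  ring

/-- The expectation of the double commutator `[f, [H, f]]` in an eigenvector of `H`. -/
lemma Matrix.IsHermitian.two_mul_dotProduct_mulVec_sub_eq {A : Matrix n n 𝕜}
    (hA : A.IsHermitian) {E : ℝ} {ψ : n → 𝕜} (hψ : A *ᵥ ψ = (E : 𝕜) • ψ) (f : n → ℝ) :
    2 * (star (fun t => (f t : 𝕜) * ψ t) ⬝ᵥ A *ᵥ (fun t => (f t : 𝕜) * ψ t)
        - E * (star (fun t => (f t : 𝕜) * ψ t) ⬝ᵥ (fun t => (f t : 𝕜) * ψ t)))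
      = -∑ t, ∑ t', (((f t - f t') ^ 2 : ℝ) : 𝕜) * (star (ψ t) * A t t' * ψ t') := by
  have hrow : ∀ t, ∑ t', A t t' * ψ t' = E * ψ t := fun t => congrFun hψ t
  have hcol : ∀ t', ∑ t, star (ψ t) * A t t' = E * star (ψ t') := by
    have h : star ψ ᵥ* A = (E : 𝕜) • star ψ := by
      rw [← hA.eq, ← star_mulVec, hψ, star_smul, RCLike.star_def, RCLike.conj_ofReal]
    exact fun t' => congrFun h t'
  have hleft : ∑ t, ∑ t', (f t : 𝕜) ^ 2 * (star (ψ t) * A t t' * ψ t')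
      = E * ∑ t, (f t : 𝕜) ^ 2 * (star (ψ t) * ψ t) := by
    rw [Finset.mul_sum]
    refine Finset.sum_congr rfl fun t _ => ?_
    simp_rw [← Finset.mul_sum, mul_assoc, ← Finset.mul_sum, hrow]
    ring
  have hright : ∑ t, ∑ t', (f t' : 𝕜) ^ 2 * (star (ψ t) * A t t' * ψ t')
      = E * ∑ t, (f t : 𝕜) ^ 2 * (star (ψ t) * ψ t) := by
    rw [Finset.sum_comm, Finset.mul_sum]
    refine Finset.sum_congr rfl fun t' _ => ?_
    simp_rw [← Finset.mul_sum, ← Finset.sum_mul, hcol]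
    ring
  have hcross : star (fun t => (f t : 𝕜) * ψ t) ⬝ᵥ A *ᵥ (fun t => (f t : 𝕜) * ψ t)
      = ∑ t, ∑ t', (f t : 𝕜) * f t' * (star (ψ t) * A t t' * ψ t') := by
    simp only [dotProduct, mulVec, Finset.mul_sum, Pi.star_apply, star_mul', RCLike.star_def,
      RCLike.conj_ofReal]
    refine Finset.sum_congr rfl fun t _ => Finset.sum_congr rfl fun t' _ => ?_
    ring
  have hnorm : star (fun t => (f t : 𝕜) * ψ t) ⬝ᵥ (fun t => (f t : 𝕜) * ψ t)
      = ∑ t, (f t : 𝕜) ^ 2 * (star (ψ t) * ψ t) := by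
    simp only [dotProduct, Pi.star_apply, star_mul', RCLike.star_def, RCLike.conj_ofReal]
    refine Finset.sum_congr rfl fun t _ => ?_
    ring
  have hexpand : ∑ t, ∑ t', (((f t - f t') ^ 2 : ℝ) : 𝕜) * (star (ψ t) * A t t' * ψ t')
      = ∑ t, ∑ t', (f t : 𝕜) ^ 2 * (star (ψ t) * A t t' * ψ t')
        + ∑ t, ∑ t', (f t' : 𝕜) ^ 2 * (star (ψ t) * A t t' * ψ t')
        - 2 * ∑ t, ∑ t', (f t : 𝕜) * f t' * (star (ψ t) * A t t' * ψ t') := by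
    simp only [Finset.mul_sum, ← Finset.sum_add_distrib, ← Finset.sum_sub_distrib]
    refine Finset.sum_congr rfl fun t _ => Finset.sum_congr rfl fun t' _ => ?_
    push_cast
    ring
  rw [hexpand, hleft, hright, hcross, hnorm]
  ring

end RCLike

/-- Schur test. -/
lemma sum_sum_mul_mul_le_of_sum_le {ι : Type*} [Fintype ι] {w : ι → ι → ℝ}
    (hw : ∀ i j, 0 ≤ w i j) {r : ℝ} (hrow : ∀ i, ∑ j, w i j ≤ r) (hcol : ∀ j, ∑ i, w i j ≤ r)
    (a : ι → ℝ) : ∑ i, ∑ j, w i j * (a i * a j) ≤ r * ∑ i, a i ^ 2 := calc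
  ∑ i, ∑ j, w i j * (a i * a j) ≤ ∑ i, ∑ j, (a i ^ 2 / 2 * w i j + a j ^ 2 / 2 * w i j) := by
    gcongr with i _ j _
    nlinarith [hw i j, mul_nonneg (hw i j) (sq_nonneg (a i - a j))]
  _ = ∑ i, a i ^ 2 / 2 * ∑ j, w i j + ∑ j, a j ^ 2 / 2 * ∑ i, w i j := by
    simp only [Finset.sum_add_distrib, Finset.mul_sum]
    rw [Finset.sum_comm (f := fun i j => a j ^ 2 / 2 * w i j)]
  _ ≤ ∑ i, a i ^ 2 / 2 * r + ∑ j, a j ^ 2 / 2 * r := by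
    gcongr with i _ j _
    · exact hrow i
    · exact hcol j
  _ = r * ∑ i, a i ^ 2 := by
    rw [Finset.mul_sum, ← Finset.sum_add_distrib]
    exact Finset.sum_congr rfl fun i _ => by ring

lemma Fin.sum_ite_abs_sub_eq_one_le_two {m : ℕ} (t : Fin m) :
    ∑ t' : Fin m, (if |(t : ℤ) - t'| = 1 then (1 : ℝ) else 0) ≤ 2 := by
  have hcard : (Finset.univ.filter fun t' : Fin m => |(t : ℤ) - t'| = 1).card ≤ 2 := by
    by_contra! h
    obtain ⟨a, ha, b, hb, c, hc, hab, hac, hbc⟩ := Finset.two_lt_card.mp h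
    simp only [Finset.mem_filter, Finset.mem_univ, true_and, Int.abs_eq_natAbs] at ha hb hc
    rw [Ne, Fin.ext_iff] at hab hac hbc
    omega
  rw [Finset.sum_boole]
  exact_mod_cast hcard

section Tridiagonal

variable {𝕜 : Type*} [RCLike 𝕜] {m : ℕ} {H : Matrix (Fin m) (Fin m) 𝕜}

lemma norm_sum_sum_sq_sub_mul_le_of_tridiagonal
    (htri : ∀ t t' : Fin m, 1 < |(t : ℤ) - t'| → H t t' = 0) (hent : ∀ t t', ‖H t t'‖ ≤ 1)
    {f : Fin m → ℝ} (hf : ∀ t t' : Fin m, |(t : ℤ) - t'| = 1 → |f t - f t'| ≤ 1)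
    (ψ : Fin m → 𝕜) :
    ‖∑ t, ∑ t', (((f t - f t') ^ 2 : ℝ) : 𝕜) * (star (ψ t) * H t t' * ψ t')‖
      ≤ 2 * ∑ t, ‖ψ t‖ ^ 2 := by
  have hterm : ∀ t t', ‖(((f t - f t') ^ 2 : ℝ) : 𝕜) * (star (ψ t) * H t t' * ψ t')‖
      ≤ (if |(t : ℤ) - t'| = 1 then 1 else 0) * (‖ψ t‖ * ‖ψ t'‖) := by
    intro t t'
    rw [norm_mul, norm_mul, norm_mul, norm_star, RCLike.norm_ofReal, abs_sq]
    split_ifs with h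
    · have hf' : (f t - f t') ^ 2 ≤ 1 := (sq_le_one_iff_abs_le_one _).mpr (hf t t' h)
      have hHtt := hent t t'
      calc (f t - f t') ^ 2 * (‖ψ t‖ * ‖H t t'‖ * ‖ψ t'‖)
          ≤ 1 * (‖ψ t‖ * 1 * ‖ψ t'‖) := by gcongr
        _ = 1 * (‖ψ t‖ * ‖ψ t'‖) := by ring
    · rcases eq_or_ne t t' with rfl | hne
      · simp
      · have hfar : 1 < |(t : ℤ) - t'| := by
          rw [Ne, Fin.ext_iff] at hne
          rw [Int.abs_eq_natAbs] at h ⊢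
          omega
        simp [htri t t' hfar]
  calc ‖∑ t, ∑ t', (((f t - f t') ^ 2 : ℝ) : 𝕜) * (star (ψ t) * H t t' * ψ t')‖
      ≤ ∑ t, ∑ t', ‖(((f t - f t') ^ 2 : ℝ) : 𝕜) * (star (ψ t) * H t t' * ψ t')‖ :=
        (norm_sum_le _ _).trans (Finset.sum_le_sum fun t _ => norm_sum_le _ _)
    _ ≤ ∑ t : Fin m, ∑ t' : Fin m,
          (if |(t : ℤ) - t'| = 1 then 1 else 0) * (‖ψ t‖ * ‖ψ t'‖) := by
        gcongr with t _ t' _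
        exact hterm t t'
    _ ≤ 2 * ∑ t, ‖ψ t‖ ^ 2 :=
        sum_sum_mul_mul_le_of_sum_le (fun _ _ => by positivity)
          Fin.sum_ite_abs_sub_eq_one_le_two
          (fun t' => by simpa only [abs_sub_comm] using Fin.sum_ite_abs_sub_eq_one_le_two t')
          (fun t => ‖ψ t‖)

lemma Matrix.IsHermitian.re_dotProduct_mulVec_sub_le_of_tridiagonal (hH : H.IsHermitian)
    (htri : ∀ t t' : Fin m, 1 < |(t : ℤ) - t'| → H t t' = 0) (hent : ∀ t t', ‖H t t'‖ ≤ 1)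
    {E : ℝ} {ψ : Fin m → 𝕜} (hψ : H *ᵥ ψ = (E : 𝕜) • ψ)
    {f : Fin m → ℝ} (hf : ∀ t t' : Fin m, |(t : ℤ) - t'| = 1 → |f t - f t'| ≤ 1) :
    RCLike.re (star (fun t => (f t : 𝕜) * ψ t) ⬝ᵥ H *ᵥ (fun t => (f t : 𝕜) * ψ t))
      - E * RCLike.re (star (fun t => (f t : 𝕜) * ψ t) ⬝ᵥ (fun t => (f t : 𝕜) * ψ t))
      ≤ ∑ t, ‖ψ t‖ ^ 2 := by
  have h := congrArg RCLike.re (hH.two_mul_dotProduct_mulVec_sub_eq hψ f)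
  simp only [RCLike.mul_re, RCLike.ofNat_re, RCLike.ofNat_im, RCLike.ofReal_re,
    RCLike.ofReal_im, zero_mul, sub_zero, map_sub, map_neg] at h
  have hbound := (abs_le.mp ((RCLike.abs_re_le_norm _).trans
    (norm_sum_sum_sq_sub_mul_le_of_tridiagonal htri hent hf ψ))).1
  linarith

lemma Matrix.IsHermitian.mul_sum_sq_sub_mean_le_one_of_tridiagonal (hH : H.IsHermitian)
    (htri : ∀ t t' : Fin m, 1 < |(t : ℤ) - t'| → H t t' = 0) (hent : ∀ t t', ‖H t t'‖ ≤ 1)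
    {i₀ : Fin m} {μ e : ℝ} (hμe : μ < e) (hgap : ∀ i, i ≠ i₀ → e ≤ hH.eigenvalues i)
    {ψ : Fin m → 𝕜} (hψ : star ψ ⬝ᵥ ψ = 1) (hHψ : H *ᵥ ψ = (μ : 𝕜) • ψ) :
    (e - μ) * ∑ t : Fin m, (((t : ℕ) : ℝ) - ∑ s : Fin m, ((s : ℕ) : ℝ) * ‖ψ s‖ ^ 2) ^ 2
      * ‖ψ t‖ ^ 2 ≤ 1 := by
  set f : Fin m → ℝ := fun t => (t : ℕ) - ∑ s : Fin m, ((s : ℕ) : ℝ) * ‖ψ s‖ ^ 2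
  have hnorm : ∑ t, ‖ψ t‖ ^ 2 = 1 := by
    have h := star_dotProduct_ofReal_mul 1 1 ψ
    simp only [Pi.one_apply, RCLike.ofReal_one, one_mul, hψ] at h
    exact RCLike.ofReal_injective (h.symm.trans RCLike.ofReal_one.symm)
  have horth : star ψ ⬝ᵥ (fun t => (f t : 𝕜) * ψ t) = 0 := by
    have h := star_dotProduct_ofReal_mul 1 f ψ
    simp only [Pi.one_apply, RCLike.ofReal_one, one_mul] at h
    rw [h, RCLike.ofReal_eq_zero]
    simp [f, sub_mul, Finset.sum_sub_distrib, ← Finset.mul_sum, hnorm]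
  have hlower := hH.le_re_dotProduct_mulVec_of_orthogonal hμe hgap
    (fun h => by simp [h] at hψ) hHψ horth
  have hupper := hH.re_dotProduct_mulVec_sub_le_of_tridiagonal htri hent hHψ
    (f := f) fun t t' h => by simp only [f, sub_sub_sub_cancel_right]; exact_mod_cast h.le
  rw [star_dotProduct_ofReal_mul, RCLike.ofReal_re] at hlower hupper
  simp only [← sq] at hlower hupper
  linarith

end Tridiagonal

lemma sq_div_two_mul_min_le_sum_sq_sub_mul {T : ℕ} {p : Fin (T + 1) → ℝ} (hp : ∀ t, 0 ≤ p t)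
    (μ : ℝ) :
    (T : ℝ) ^ 2 / 2 * min (p 0) (p (Fin.last T))
      ≤ ∑ t : Fin (T + 1), (((t : ℕ) : ℝ) - μ) ^ 2 * p t := by
  rcases Nat.eq_zero_or_pos T with rfl | hT
  · simpa using mul_nonneg (sq_nonneg μ) (hp 0)
  have hends : (0 - μ) ^ 2 * p 0 + ((T : ℝ) - μ) ^ 2 * p (Fin.last T)
      ≤ ∑ t : Fin (T + 1), (((t : ℕ) : ℝ) - μ) ^ 2 * p t := by
    have h0 : (0 : Fin (T + 1)) ≠ Fin.last T := by simp [Fin.ext_iff, hT.ne]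
    simpa [Finset.sum_pair h0] using Finset.sum_le_sum_of_subset_of_nonneg
      (Finset.subset_univ {0, Fin.last T})
      fun t _ _ => mul_nonneg (sq_nonneg (((t : ℕ) : ℝ) - μ)) (hp t)
  have hmin₀ := min_le_left (p 0) (p (Fin.last T))
  have hmin_last := min_le_right (p 0) (p (Fin.last T))
  have hmin := le_min (hp 0) (hp (Fin.last T))
  nlinarith [mul_nonneg (sq_nonneg (0 - μ)) (sub_nonneg.mpr hmin₀),
    mul_nonneg (sq_nonneg ((T : ℝ) - μ)) (sub_nonneg.mpr hmin_last),
    mul_nonneg (sq_nonneg (2 * μ - T)) hmin]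

lemma Monotone.apply_one_le_of_ne_perm_zero {α : Type*} [Preorder α] {k : ℕ}
    {E g : Fin (k + 1) → α} (hE : Monotone E) {σ : Equiv.Perm (Fin (k + 1))}
    (hσ : ∀ i, E i = g (σ i)) {i : Fin (k + 1)} (hi : i ≠ σ 0) : E 1 ≤ g i := by
  rw [← σ.apply_symm_apply i, ← hσ]
  exact hE (Fin.one_le_of_ne_zero fun h => hi (by rw [← h, σ.apply_symm_apply]))

theorem stmt10 :
    ∃ C : ℝ, 0 < C ∧ ∀ T : ℕ, 1 ≤ T →
      ∀ H : Matrix (Fin (T + 1)) (Fin (T + 1)) ℂ, ∀ hH : H.IsHermitian,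
      (∀ t t' : Fin (T + 1), 1 < |(t.val : ℤ) - (t'.val : ℤ)| → H t t' = 0) →
      (∀ t t' : Fin (T + 1), ‖H t t'‖ ≤ 1) →
      -- `E` is the nondecreasing enumeration of the eigenvalues of `H` with multiplicity
      ∀ E : Fin (T + 1) → ℝ, Monotone E →
      (∃ σ : Equiv.Perm (Fin (T + 1)), ∀ i, E i = hH.eigenvalues (σ i)) →
      ∀ ψ : Fin (T + 1) → ℂ, star ψ ⬝ᵥ ψ = 1 →
        H.mulVec ψ = (E 0 : ℂ) • ψ →
        (E 1 - E 0) * min (‖ψ 0‖ ^ 2) (‖ψ (Fin.last T)‖ ^ 2)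
          ≤ C / (T : ℝ) ^ 2 := by
  refine ⟨2, two_pos, fun T _ H hH htri hent E hE ⟨σ, hσ⟩ ψ hψ heig => ?_⟩
  rcases (sub_nonneg.mpr (hE (Fin.zero_le 1))).eq_or_lt with hgap | hgap
  · rw [← hgap, zero_mul]
    positivity
  have hvar := hH.mul_sum_sq_sub_mean_le_one_of_tridiagonal htri hent (lt_of_sub_pos hgap)
    (fun i hi => hE.apply_one_le_of_ne_perm_zero hσ hi) hψ heig
  have hends := sq_div_two_mul_min_le_sum_sq_sub_mul (fun t => sq_nonneg ‖ψ t‖)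
    (∑ s : Fin (T + 1), ((s : ℕ) : ℝ) * ‖ψ s‖ ^ 2)
  rw [le_div_iff₀ (by positivity)]
  nlinarith [mul_le_mul_of_nonneg_left hends hgap.le]
end
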